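/- Let f : ℝ → ℝ be continuously differentiable on (0,∞), let M be an m×m real symmetric positive definite matrix, and suppose the map X ↦ f(X) (applying f to symmetric matrices via the spectral decomposition) is Fréchet differentiable at M on the space of m×m real symmetric matrices, with derivative D. Then for all m×m real symmetric matrices A and B, trace(A · D(B)) = trace(B · D(A)). -/

import Mathlib

open Matrix in
/-- Applying a real function to a real symmetric matrix via the spectral
decomposition: `f(A) = U Diag(f(λ₁),…,f(λ_m)) Uᵀ`. Junk value `0` on
non-symmetric input. -/
noncomputable def matFun (f : ℝ → ℝ) {m : ℕ} (A : Matrix (Fin m) (Fin m) ℝ) :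
    Matrix (Fin m) (Fin m) ℝ :=
  if hA : A.IsHermitian then
    (hA.eigenvectorUnitary : Matrix (Fin m) (Fin m) ℝ) *
      Matrix.diagonal (fun i => f (hA.eigenvalues i)) *
      star (hA.eigenvectorUnitary : Matrix (Fin m) (Fin m) ℝ)
  else 0

attribute [local instance] Matrix.normedAddCommGroup Matrix.normedSpace

/-!
Write `M = U diag(λ) Uᵀ` and `E_pq = e_pq + e_qp`. Along curves `V(t) diag(μ(t)) V(t)ᵀ` of
symmetric matrices `f(·)` is known exactly, and differentiating along them evaluates `D` on every
`U E_pq Uᵀ`: shifting `λ_p` gives `D(U e_pp Uᵀ) = f'(λ_p) U e_pp Uᵀ`; for `λ_p ≠ λ_q`, rotating the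
eigenbasis in the `(p,q)`-plane moves `M` with velocity `(λ_q - λ_p) U E_pq Uᵀ` and `f(M)` with
velocity `(f(λ_q) - f(λ_p)) U E_pq Uᵀ`; for `λ_p = λ_q` the rotation by `π/4` fixes `M` and
carries `e_qq - e_pp` to `E_pq`, reducing to the first case. This is the Daleckii–Krein formula
`Uᵀ D(B) U = L ⊙ (Uᵀ B U)` with the symmetric Loewner matrix `L_ij = f[λ_i, λ_j]` of divided
differences, so `tr(A D(B)) = ∑ A'_ij L_ji B'_ji` with `A' = Uᵀ A U`, `B' = Uᵀ B U`, which is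
symmetric in `A` and `B`.
-/

open Matrix Polynomial Unitary Filter Topology Real

namespace Matrix

section

variable {n : Type*}

theorem IsSymm.hadamard {α : Type*} [CommMagma α] {A B : Matrix n n α} (hA : A.IsSymm)
    (hB : B.IsSymm) : (A ⊙ B).IsSymm :=
  IsSymm.ext fun i j => by simp [hA.apply, hB.apply]

theorem trace_mul_hadamard_comm [Fintype n] {α : Type*} [CommSemiring α] {K : Matrix n n α}
    (hK : K.IsSymm) (A B : Matrix n n α) : (A * (K ⊙ B)).trace = (B * (K ⊙ A)).trace := by
  simp only [trace, diag, mul_apply, hadamard_apply]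
  rw [Finset.sum_comm]
  refine Finset.sum_congr rfl fun i _ => Finset.sum_congr rfl fun j _ => ?_
  rw [hK.apply]
  ring

noncomputable def loewnerMatrix (f : ℝ → ℝ) (lam : n → ℝ) : Matrix n n ℝ :=
  of fun i j => dslope f (lam i) (lam j)

theorem loewnerMatrix_apply (f : ℝ → ℝ) (lam : n → ℝ) (i j : n) :
    loewnerMatrix f lam i j = dslope f (lam i) (lam j) :=
  rfl

theorem loewnerMatrix_isSymm (f : ℝ → ℝ) (lam : n → ℝ) : (loewnerMatrix f lam).IsSymm := by
  refine IsSymm.ext fun i j => ?_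
  rw [loewnerMatrix_apply, loewnerMatrix_apply]
  rcases eq_or_ne (lam i) (lam j) with h | h
  · rw [h]
  · rw [dslope_of_ne _ h, dslope_of_ne _ h.symm, slope_comm]

end

section

variable {n : Type*} [DecidableEq n]

theorem isHermitian_single_self (p : n) : (single p p (1 : ℝ)).IsHermitian := by
  simp [IsHermitian]

theorem diagonal_add_smul_single {α : Type*} [Semiring α] (d : n → α) (c : α) (p : n) :
    diagonal (d + c • Pi.single p 1) = diagonal d + c • single p p 1 := by
  rw [← diagonal_single, ← diagonal_smul, diagonal_add]
  rfl

theorem sum_smul_single_add_single [Fintype n] {α : Type*} [Semiring α] {Y : Matrix n n α}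
    (hY : Y.IsSymm) : ∑ p, ∑ q, Y p q • (single p q 1 + single q p 1) = (2 : α) • Y := by
  simp only [smul_add, Finset.sum_add_distrib, smul_single, smul_eq_mul, mul_one]
  conv_lhs => enter [2, 2, p, 2, q]; rw [← hY.apply p q]
  rw [← matrix_eq_sum_single, Finset.sum_comm, ← matrix_eq_sum_single, two_smul]

end

variable {n : Type*} [Fintype n] [DecidableEq n]

theorem single_mul_diagonal {α : Type*} [CommSemiring α] (i j : n) (c : α) (d : n → α) :
    single i j c * diagonal d = d j • single i j c := by
  ext a b
  by_cases h : i = a ∧ j = b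
  · obtain ⟨rfl, rfl⟩ := h
    simp [mul_comm]
  · simp [single_apply_of_ne _ _ _ _ _ h]

theorem diagonal_mul_single {α : Type*} [Semiring α] (i j : n) (c : α) (d : n → α) :
    diagonal d * single i j c = d i • single i j c := by
  ext a b
  by_cases h : i = a ∧ j = b
  · obtain ⟨rfl, rfl⟩ := h
    simp
  · simp [single_apply_of_ne _ _ _ _ _ h]

theorem aeval_diagonal {R : Type*} [CommSemiring R] (d : n → R) (P : R[X]) :
    aeval (diagonal d) P = diagonal fun i => P.eval (d i) := by
  rw [← diagonalAlgHom_apply (R := R), aeval_algHom_apply, aeval_pi_apply]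
  rfl

theorem cfc_diagonal (f : ℝ → ℝ) (d : n → ℝ) : cfc f (diagonal d) = diagonal (f ∘ d) := by
  classical
  set P := Lagrange.interpolate (Finset.univ.image d) id f
  have hP : ∀ i, P.eval (d i) = f (d i) := fun i =>
    Lagrange.eval_interpolate_at_node f Function.injective_id.injOn
      (Finset.mem_image_of_mem d (Finset.mem_univ i))
  have hspec : (spectrum ℝ (diagonal d)).EqOn f P.eval := by
    rw [spectrum_diagonal]
    rintro - ⟨i, rfl⟩
    exact (hP i).symm
  have hd : IsSelfAdjoint (diagonal d) := isHermitian_diagonal d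
  rw [cfc_congr hspec, cfc_polynomial P _ hd, aeval_diagonal]
  exact congrArg diagonal (funext hP)

noncomputable def planeRotation (θ : ℝ) (p q : n) : Matrix n n ℝ :=
  1 + (Real.cos θ - 1) • (single p p 1 + single q q 1) + Real.sin θ • (single p q 1 - single q p 1)

theorem star_planeRotation (θ : ℝ) (p q : n) :
    star (planeRotation θ p q) = planeRotation (-θ) p q := by
  simp only [planeRotation, star_add, star_smul, star_sub, star_one, star_eq_conjTranspose,
    conjTranspose_single, star_trivial, Real.cos_neg, Real.sin_neg]
  module

theorem planeRotation_mul_diagonal_mul_star {p q : n} (hpq : p ≠ q) (θ : ℝ) (d : n → ℝ) :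
    planeRotation θ p q * diagonal d * star (planeRotation θ p q) =
      diagonal d + (Real.sin θ ^ 2 * (d q - d p)) • single p p 1
        + (Real.sin θ ^ 2 * (d p - d q)) • single q q 1
        + (Real.cos θ * Real.sin θ * (d q - d p)) • (single p q 1 + single q p 1) := by
  have hθ := Real.cos_sq_add_sin_sq θ
  rw [star_planeRotation]
  simp only [planeRotation, Real.cos_neg, Real.sin_neg, add_mul, mul_add, one_mul, mul_one,
    smul_mul_assoc, mul_smul_comm, sub_mul, mul_sub, single_mul_diagonal, diagonal_mul_single,
    single_mul_single_same, single_mul_single_of_ne _ _ _ _ hpq,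
    single_mul_single_of_ne _ _ _ _ hpq.symm, smul_zero, smul_smul, zero_add]
  match_scalars <;> grind

theorem planeRotation_mem_unitary {p q : n} (hpq : p ≠ q) (θ : ℝ) :
    planeRotation θ p q ∈ unitary (Matrix n n ℝ) := by
  rw [← unitaryGroup, mem_unitaryGroup_iff]
  simpa using planeRotation_mul_diagonal_mul_star hpq θ 1

theorem hasDerivAt_planeRotation_mul_diagonal_mul_star {p q : n} (hpq : p ≠ q) (d : n → ℝ) :
    HasDerivAt (fun θ => planeRotation θ p q * diagonal d * star (planeRotation θ p q))
      ((d q - d p) • (single p q 1 + single q p 1)) 0 := by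
  simp only [planeRotation_mul_diagonal_mul_star hpq]
  have hsin : HasDerivAt (fun θ => Real.sin θ ^ 2) 0 0 :=
    ((Real.hasDerivAt_sin 0).pow 2).congr_deriv (by simp)
  have hcossin : HasDerivAt (fun θ => Real.cos θ * Real.sin θ) 1 0 :=
    ((Real.hasDerivAt_cos 0).mul (Real.hasDerivAt_sin 0)).congr_deriv (by simp)
  refine ((((hsin.mul_const (d q - d p)).smul_const (single p p (1 : ℝ))).const_add
    (diagonal d)).add ((hsin.mul_const (d p - d q)).smul_const (single q q (1 : ℝ)))).add
    ((hcossin.mul_const (d q - d p)).smul_const (single p q (1 : ℝ) + single q p 1))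
    |>.congr_deriv ?_
  simp

theorem trace_mul_conjStarAlgAut (u : unitary (Matrix n n ℝ)) (A Y : Matrix n n ℝ) :
    (A * conjStarAlgAut ℝ _ u Y).trace = ((conjStarAlgAut ℝ _ u).symm A * Y).trace := by
  rw [conjStarAlgAut_apply, conjStarAlgAut_symm_apply, ← mul_assoc, ← mul_assoc, trace_mul_comm]
  simp only [mul_assoc]

end Matrix

theorem matFun_eq_cfc (f : ℝ → ℝ) {m : ℕ} {A : Matrix (Fin m) (Fin m) ℝ} (hA : A.IsHermitian) :
    matFun f A = cfc f A := by
  rw [hA.cfc_eq, IsHermitian.cfc, matFun, dif_pos hA, conjStarAlgAut_apply]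
  rfl

theorem matFun_conjStarAlgAut_diagonal (f : ℝ → ℝ) {m : ℕ}
    (u : unitary (Matrix (Fin m) (Fin m) ℝ)) (d : Fin m → ℝ) :
    matFun f (conjStarAlgAut ℝ _ u (diagonal d)) = conjStarAlgAut ℝ _ u (diagonal (f ∘ d)) := by
  have hcont : Continuous (conjStarAlgAut ℝ _ u) :=
    (conjStarAlgAut ℝ _ u).toAlgEquiv.toLinearMap.continuous_of_finiteDimensional
  have hd : IsSelfAdjoint (diagonal d) := isHermitian_diagonal d
  rw [matFun_eq_cfc f (hd.map (conjStarAlgAut ℝ _ u)), ← cfc_diagonal]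
  refine (StarAlgHomClass.map_cfc _ f _ ?_ hcont).symm
  rw [spectrum_diagonal]
  exact (Set.finite_range d).continuousOn _

theorem HasFDerivWithinAt.apply_eq_of_hasDerivAt_comp {𝕜 E F : Type*}
    [NontriviallyNormedField 𝕜] [NormedAddCommGroup E] [NormedSpace 𝕜 E] [NormedAddCommGroup F]
    [NormedSpace 𝕜 F] {g : E → F} {g' : E →L[𝕜] F} {s : Set E} {x : E} {γ : 𝕜 → E} {t : 𝕜}
    {v : E} {w : F} (hg : HasFDerivWithinAt g g' s x) (hγ : HasDerivAt γ v t) (hγt : γ t = x)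
    (hγs : ∀ᶠ τ in 𝓝 t, γ τ ∈ s) (hgγ : HasDerivAt (g ∘ γ) w t) : g' v = w := by
  subst hγt
  exact (hg.comp_hasDerivAt t hγ hγs).unique hgγ

section DaleckiiKrein

variable {f : ℝ → ℝ} {m : ℕ} {M : Matrix (Fin m) (Fin m) ℝ}
  {D : Matrix (Fin m) (Fin m) ℝ →L[ℝ] Matrix (Fin m) (Fin m) ℝ}
  {u : unitary (Matrix (Fin m) (Fin m) ℝ)} {lam : Fin m → ℝ}

theorem HasFDerivWithinAt.matFun_apply_conj_single_self
    (hD : HasFDerivWithinAt (fun H => matFun f (M + H)) D {H | H.IsHermitian} 0)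
    (hM : M = conjStarAlgAut ℝ _ u (diagonal lam)) (p : Fin m)
    (hfp : DifferentiableAt ℝ f (lam p)) :
    D (conjStarAlgAut ℝ _ u (single p p 1)) =
      deriv f (lam p) • conjStarAlgAut ℝ _ u (single p p 1) := by
  set E := conjStarAlgAut ℝ _ u (single p p 1)
  have hshift : ∀ t : ℝ, f ∘ (lam + t • Pi.single p 1) =
      f ∘ lam + (f (lam p + t) - f (lam p)) • Pi.single p 1 := by
    intro t
    funext i
    by_cases hi : i = p
    · subst hi
      simp
    · simp [hi]
  have hvalue : ∀ t : ℝ, matFun f (M + t • E) =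
      conjStarAlgAut ℝ _ u (diagonal (f ∘ lam)) + (f (lam p + t) - f (lam p)) • E := by
    intro t
    have hcurve : M + t • E = conjStarAlgAut ℝ _ u (diagonal (lam + t • Pi.single p 1)) := by
      rw [diagonal_add_smul_single, map_add, map_smul, hM]
    rw [hcurve, matFun_conjStarAlgAut_diagonal, hshift, diagonal_add_smul_single, map_add,
      map_smul]
  have hE : IsSelfAdjoint E := IsSelfAdjoint.map (isHermitian_single_self p) _
  have hf' : HasDerivAt (fun t => f (lam p + t)) (deriv f (lam p)) 0 :=
    HasDerivAt.comp_const_add _ _ (by simpa using hfp.hasDerivAt)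
  refine hD.apply_eq_of_hasDerivAt_comp (γ := fun t => t • E)
    (by simpa using (hasDerivAt_id (0 : ℝ)).smul_const E) (zero_smul ℝ E)
    (.of_forall fun t => (IsSelfAdjoint.all t).smul hE) ?_
  simp only [Function.comp_def, hvalue]
  exact ((hf'.sub_const _).smul_const E).const_add _

theorem HasFDerivWithinAt.matFun_apply_conj_single_add_single_of_ne
    (hD : HasFDerivWithinAt (fun H => matFun f (M + H)) D {H | H.IsHermitian} 0)
    (hM : M = conjStarAlgAut ℝ _ u (diagonal lam)) {p q : Fin m} (hpq : p ≠ q)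
    (hlam : lam p ≠ lam q) :
    D (conjStarAlgAut ℝ _ u (single p q 1 + single q p 1)) =
      slope f (lam p) (lam q) • conjStarAlgAut ℝ _ u (single p q 1 + single q p 1) := by
  set E := conjStarAlgAut ℝ _ u (single p q 1 + single q p 1)
  let r : ℝ → unitary (Matrix (Fin m) (Fin m) ℝ) := fun θ =>
    ⟨planeRotation θ p q, planeRotation_mem_unitary hpq θ⟩
  have hrot : ∀ d : Fin m → ℝ,
      HasDerivAt (fun θ => conjStarAlgAut ℝ _ (u * r θ) (diagonal d)) ((d q - d p) • E) 0 := by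
    intro d
    let φ : Matrix (Fin m) (Fin m) ℝ →L[ℝ] Matrix (Fin m) (Fin m) ℝ :=
      (conjStarAlgAut ℝ _ u).toAlgEquiv.toLinearMap.toContinuousLinearMap
    have hφ : ∀ θ, conjStarAlgAut ℝ _ (u * r θ) (diagonal d) =
        φ (planeRotation θ p q * diagonal d * star (planeRotation θ p q)) := fun θ => by
      rw [conjStarAlgAut_mul_apply, conjStarAlgAut_apply (r θ)]
      rfl
    simp only [hφ, E, ← map_smul]
    exact φ.hasFDerivAt.comp_hasDerivAt (0 : ℝ)
      (hasDerivAt_planeRotation_mul_diagonal_mul_star hpq d)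
  have hr0 : r 0 = 1 := Subtype.ext (by simp [r, planeRotation])
  have hMh : IsSelfAdjoint M := hM ▸ IsSelfAdjoint.map (isHermitian_diagonal lam) _
  have key : (lam q - lam p) • D E = (f (lam q) - f (lam p)) • E := by
    rw [← D.map_smul]
    exact hD.apply_eq_of_hasDerivAt_comp
      (γ := fun θ => conjStarAlgAut ℝ _ (u * r θ) (diagonal lam) - M) ((hrot lam).sub_const M)
      (by simp [hr0, hM])
      (.of_forall fun θ => (IsSelfAdjoint.map (isHermitian_diagonal lam) _).sub hMh) (by
        simp only [Function.comp_def, add_sub_cancel, matFun_conjStarAlgAut_diagonal]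
        exact hrot (f ∘ lam))
  have hne : lam q - lam p ≠ 0 := sub_ne_zero.mpr (Ne.symm hlam)
  rw [slope_def_module, smul_assoc, ← key, smul_smul, inv_mul_cancel₀ hne, one_smul]

theorem HasFDerivWithinAt.matFun_apply_conj_single_add_single_of_eq
    (hD : HasFDerivWithinAt (fun H => matFun f (M + H)) D {H | H.IsHermitian} 0)
    (hM : M = conjStarAlgAut ℝ _ u (diagonal lam)) {p q : Fin m} (hpq : p ≠ q)
    (hlam : lam p = lam q) (hfp : DifferentiableAt ℝ f (lam p)) :
    D (conjStarAlgAut ℝ _ u (single p q 1 + single q p 1)) =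
      deriv f (lam p) • conjStarAlgAut ℝ _ u (single p q 1 + single q p 1) := by
  set v := u * ⟨planeRotation (π / 4) p q, planeRotation_mem_unitary hpq (π / 4)⟩
  have hsin : Real.sin (π / 4) ^ 2 = 2⁻¹ := by
    rw [Real.sin_pi_div_four, div_pow, Real.sq_sqrt zero_le_two]
    norm_num
  have hcossin : Real.cos (π / 4) * Real.sin (π / 4) = 2⁻¹ := by
    rw [Real.cos_pi_div_four, ← Real.sin_pi_div_four, ← sq, hsin]
  have hconj : ∀ d, conjStarAlgAut ℝ _ v (diagonal d) = conjStarAlgAut ℝ _ u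
      (diagonal d + (2⁻¹ * (d q - d p)) • single p p 1 + (2⁻¹ * (d p - d q)) • single q q 1
        + (2⁻¹ * (d q - d p)) • (single p q 1 + single q p 1)) := fun d => by
    have h := planeRotation_mul_diagonal_mul_star hpq (π / 4) d
    rw [hsin, hcossin] at h
    rw [conjStarAlgAut_mul_apply, ← h]
    rfl
  have hMv : M = conjStarAlgAut ℝ _ v (diagonal lam) := by
    simp [hconj, hM, hlam]
  have hd : diagonal (Pi.single q 1 - Pi.single p 1) = single q q (1 : ℝ) - single p p 1 := by
    rw [← diagonal_single, ← diagonal_single, diagonal_sub]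
    rfl
  have hE : conjStarAlgAut ℝ _ u (single p q 1 + single q p 1) =
      conjStarAlgAut ℝ _ v (single q q 1) - conjStarAlgAut ℝ _ v (single p p 1) := by
    rw [← map_sub, ← hd, hconj, hd]
    simp only [Pi.sub_apply, Pi.single_eq_same, Pi.single_eq_of_ne hpq,
      Pi.single_eq_of_ne hpq.symm]
    congr 1
    module
  rw [hE, map_sub, hD.matFun_apply_conj_single_self hMv q (hlam ▸ hfp),
    hD.matFun_apply_conj_single_self hMv p hfp, hlam, smul_sub]

theorem HasFDerivWithinAt.matFun_apply_conj_single_add_single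
    (hD : HasFDerivWithinAt (fun H => matFun f (M + H)) D {H | H.IsHermitian} 0)
    (hM : M = conjStarAlgAut ℝ _ u (diagonal lam)) (hf : ∀ i, DifferentiableAt ℝ f (lam i))
    (p q : Fin m) :
    D (conjStarAlgAut ℝ _ u (single p q 1 + single q p 1)) =
      dslope f (lam p) (lam q) • conjStarAlgAut ℝ _ u (single p q 1 + single q p 1) := by
  rcases eq_or_ne p q with rfl | hpq
  · rw [← two_smul ℝ, map_smul, map_smul, hD.matFun_apply_conj_single_self hM p (hf p),
      dslope_same, smul_comm]
  rcases eq_or_ne (lam p) (lam q) with hlam | hlam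
  · rw [← hlam, dslope_same]
    exact hD.matFun_apply_conj_single_add_single_of_eq hM hpq hlam (hf p)
  · rw [dslope_of_ne _ hlam.symm]
    exact hD.matFun_apply_conj_single_add_single_of_ne hM hpq hlam

theorem HasFDerivWithinAt.matFun_apply_eq_conj_loewnerMatrix_hadamard
    (hD : HasFDerivWithinAt (fun H => matFun f (M + H)) D {H | H.IsHermitian} 0)
    (hM : M = conjStarAlgAut ℝ _ u (diagonal lam)) (hf : ∀ i, DifferentiableAt ℝ f (lam i))
    {B : Matrix (Fin m) (Fin m) ℝ} (hB : B.IsHermitian) :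
    D B = conjStarAlgAut ℝ _ u (loewnerMatrix f lam ⊙ (conjStarAlgAut ℝ _ u).symm B) := by
  set B' := (conjStarAlgAut ℝ _ u).symm B
  have hB' : B'.IsSymm :=
    isHermitian_iff_isSymm.mp (IsSelfAdjoint.map hB (conjStarAlgAut ℝ _ u).symm)
  have hLB' : (loewnerMatrix f lam ⊙ B').IsSymm := (loewnerMatrix_isSymm f lam).hadamard hB'
  apply smul_right_injective _ (two_ne_zero (α := ℝ))
  calc (2 : ℝ) • D B
      = ∑ p, ∑ q, B' p q • D (conjStarAlgAut ℝ _ u (single p q 1 + single q p 1)) := by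
        rw [← map_smul, ← StarAlgEquiv.apply_symm_apply (conjStarAlgAut ℝ _ u) B,
          ← map_smul, ← sum_smul_single_add_single hB']
        simp only [map_sum, map_smul]
    _ = ∑ p, ∑ q, (loewnerMatrix f lam ⊙ B') p q •
          conjStarAlgAut ℝ _ u (single p q 1 + single q p 1) := by
        simp only [hD.matFun_apply_conj_single_add_single hM hf, smul_smul, hadamard_apply,
          loewnerMatrix_apply, mul_comm]
    _ = (2 : ℝ) • conjStarAlgAut ℝ _ u (loewnerMatrix f lam ⊙ B') := by
        rw [← map_smul, ← sum_smul_single_add_single hLB']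
        simp only [map_sum, map_smul]

end DaleckiiKrein

open Asymptotics in
/-- Let `f` be continuously differentiable on `(0,∞)`, `M`
symmetric positive definite, and suppose `X ↦ f(X)` is Fréchet differentiable
at `M` on the space of symmetric matrices, with derivative `D` (that is,
`f(M+H) = f(M) + D(H) + o(‖H‖)` for symmetric increments `H`). Then for all
symmetric matrices `A`, `B`, `trace (A ⬝ D(B)) = trace (B ⬝ D(A))`. -/
theorem trace_fderiv_matFun_symm (f : ℝ → ℝ)
    (hf : ContDiffOn ℝ 1 f (Set.Ioi (0 : ℝ)))
    (m : ℕ) (M : Matrix (Fin m) (Fin m) ℝ) (hM : M.PosDef)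
    (D : Matrix (Fin m) (Fin m) ℝ →L[ℝ] Matrix (Fin m) (Fin m) ℝ)
    (hD : (fun H : Matrix (Fin m) (Fin m) ℝ => matFun f (M + H) - matFun f M - D H)
      =o[nhdsWithin 0 {H : Matrix (Fin m) (Fin m) ℝ | H.IsHermitian}]
        (fun H : Matrix (Fin m) (Fin m) ℝ => H)) :
    ∀ A B : Matrix (Fin m) (Fin m) ℝ, A.IsHermitian → B.IsHermitian →
      (A * D B).trace = (B * D A).trace := by
  intro A B hA hB
  have hD' : HasFDerivWithinAt (fun H => matFun f (M + H)) D {H | H.IsHermitian} 0 := by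
    refine .of_isLittleO ?_
    simp only [add_zero, sub_zero]
    exact hD
  have hMu : M = conjStarAlgAut ℝ _ hM.1.eigenvectorUnitary (diagonal hM.1.eigenvalues) := by
    simpa using hM.1.spectral_theorem
  have hfd : ∀ i, DifferentiableAt ℝ f (hM.1.eigenvalues i) := fun i =>
    (hf.differentiableOn one_ne_zero).differentiableAt (Ioi_mem_nhds (hM.eigenvalues_pos i))
  rw [hD'.matFun_apply_eq_conj_loewnerMatrix_hadamard hMu hfd hA,
    hD'.matFun_apply_eq_conj_loewnerMatrix_hadamard hMu hfd hB, trace_mul_conjStarAlgAut,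
    trace_mul_conjStarAlgAut]
  exact trace_mul_hadamard_comm (loewnerMatrix_isSymm f _) _ _
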